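/- Let d ≥ 3, let {E_x}_{x=1}^{d²} be a semi-SIC POVM with parameter b on ℂ^d, let a₋ = (1 − √(1 − 4b(d²−1)))/2, and let k denote the number of indices x with Tr[E_x] = a₋. If a₋ ≠ (1 + √(1 − 4b(d²−1)))/2, then 2k ≠ d² and b = (k − d)·(k + d − d²) / ((d² − 1)·(d² − 2k)²). -/

import Mathlib

/-! For a rank-one `E` we have `Tr (E * E) = (Tr E)²`, so multiplying `∑ y, E y = 1` by `E x` and
taking traces gives `t = t² + (d² - 1) b` for `t = Tr (E x)`: every trace is one of the two roots
`a₋, a₊` of this quadratic. Summing all traces gives `k a₋ + (d² - k) a₊ = d`, that is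
`√(1 - 4b(d² - 1)) (d² - 2k) = 2d - d²`; the right side is nonzero for `d ≥ 3`, and squaring
solves for `b`. -/

open Matrix
open scoped ComplexOrder

noncomputable section

/-- A semi-SIC POVM with parameter `b` on `ℂ^d`: a family of `d²` positive semidefinite
rank-one matrices summing to the identity, spanning the real vector space of Hermitian
matrices, and with constant pairwise Hilbert-Schmidt inner product `b`. -/
def IsSemiSIC (d : ℕ) (b : ℝ) (E : Fin (d ^ 2) → Matrix (Fin d) (Fin d) ℂ) : Prop :=
  (∀ x, (E x).PosSemidef) ∧
  (∀ x, (E x).rank = 1) ∧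
  (∑ x, E x = 1) ∧
  (∀ A : Matrix (Fin d) (Fin d) ℂ, A.IsHermitian → A ∈ Submodule.span ℝ (Set.range E)) ∧
  (∀ x y, x ≠ y → (E x * E y).trace = (b : ℂ))

open Finset

namespace Matrix

variable {m n K : Type*} [Fintype m] [Fintype n]

theorem exists_eq_vecMulVec_of_rank_le_one [Field K] {A : Matrix m n K} (hA : A.rank ≤ 1) :
    ∃ (u : m → K) (v : n → K), A = vecMulVec u v := by
  rw [rank_eq_finrank_span_cols, finrank_le_one_iff] at hA
  obtain ⟨w, hw⟩ := hA
  choose v hv using fun j => hw ⟨A.col j, Submodule.subset_span (Set.mem_range_self j)⟩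
  refine ⟨w, v, ext fun i j => ?_⟩
  have hentry := congrFun (congrArg Subtype.val (hv j)) i
  simp only [SetLike.val_smul, Pi.smul_apply, smul_eq_mul, col_apply] at hentry
  rw [vecMulVec_apply, ← hentry, mul_comm]

theorem trace_mul_self_of_rank_le_one [Field K] {A : Matrix n n K} (hA : A.rank ≤ 1) :
    (A * A).trace = A.trace ^ 2 := by
  obtain ⟨u, v, rfl⟩ := exists_eq_vecMulVec_of_rank_le_one hA
  rw [vecMulVec_mul_vecMulVec, trace_vecMulVec, trace_vecMulVec, dotProduct_smul, smul_eq_mul,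
    dotProduct_comm v u, sq]

theorem IsHermitian.ofReal_re_trace {A : Matrix n n ℂ} (hA : A.IsHermitian) :
    ((A.trace.re : ℝ) : ℂ) = A.trace :=
  Complex.conj_eq_iff_re.mp (by rw [starRingEnd_apply, ← trace_conjTranspose, hA.eq])

theorem trace_add_eq_trace_mul_self_add_card_mul {ι R : Type*} [Fintype ι] [DecidableEq n]
    [CommRing R] {E : ι → Matrix n n R} (hsum : ∑ x, E x = 1) {β : R}
    (hβ : ∀ x y, x ≠ y → (E x * E y).trace = β) (x : ι) :
    (E x).trace + β = (E x * E x).trace + Fintype.card ι * β := by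
  have hexpand : (E x).trace = ∑ y, (E x * E y).trace := by
    rw [← trace_sum, ← mul_sum, hsum, mul_one]
  have hdiag : ∑ y, ((E x * E y).trace - β) = (E x * E x).trace - β :=
    sum_eq_single x (fun y _ hy => by rw [hβ x y (Ne.symm hy), sub_self])
      (fun hx => absurd (mem_univ x) hx)
  rw [sum_sub_distrib, ← hexpand, sum_const, card_univ, nsmul_eq_mul] at hdiag
  linear_combination hdiag

end Matrix

theorem Fintype.sum_eq_card_mul_add_card_filter_mul_sub {ι R : Type*} [Fintype ι] [CommRing R]
    [DecidableEq R] {t : ι → R} {a c : R} (h : ∀ x, t x = a ∨ t x = c) :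
    ∑ x, t x = Fintype.card ι * c + #{x | t x = a} * (a - c) := by
  have hsplit : ∀ x, t x = c + if t x = a then a - c else 0 := fun x => by
    split_ifs with hxa
    · rw [hxa]; ring
    · rw [add_zero]; exact (h x).resolve_left hxa
  rw [Fintype.sum_congr _ _ hsplit, Finset.sum_add_distrib, ← Finset.sum_filter]
  simp only [Finset.sum_const, Finset.card_univ, nsmul_eq_mul]

theorem eq_or_eq_of_sq_sub_self_add_eq_zero {t c : ℝ} (h : t ^ 2 - t + c = 0) :
    t = (1 - √(1 - 4 * c)) / 2 ∨ t = (1 + √(1 - 4 * c)) / 2 := by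
  rw [show 1 - 4 * c = (2 * t - 1) ^ 2 by linear_combination (-4) * h, Real.sqrt_sq_eq_abs]
  rcases abs_choice (2 * t - 1) with habs | habs <;> rw [habs]
  · right; ring
  · left; ring

theorem semiSIC_parameter_eq_of_sq_eq_of_mul_eq {d k b s : ℝ} (hd : d ^ 2 ≠ 2 * d) (hd1 : d ^ 2 ≠ 1)
    (hs : s ^ 2 = 1 - 4 * b * (d ^ 2 - 1)) (hlin : s * (d ^ 2 - 2 * k) = 2 * d - d ^ 2) :
    d ^ 2 - 2 * k ≠ 0 ∧ b = (k - d) * (k + d - d ^ 2) / ((d ^ 2 - 1) * (d ^ 2 - 2 * k) ^ 2) := by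
  have hk : d ^ 2 - 2 * k ≠ 0 := by
    intro h
    rw [h, mul_zero] at hlin
    exact hd (by linarith)
  refine ⟨hk, ?_⟩
  rw [eq_div_iff (mul_ne_zero (sub_ne_zero.mpr hd1) (pow_ne_zero 2 hk))]
  have hsq : (1 - 4 * b * (d ^ 2 - 1)) * (d ^ 2 - 2 * k) ^ 2 = (2 * d - d ^ 2) ^ 2 := by
    rw [← hs]
    linear_combination (s * (d ^ 2 - 2 * k) + (2 * d - d ^ 2)) * hlin
  linear_combination (-1 / 4 : ℝ) * hsq

theorem b_formula_of_isSemiSIC_general (d : ℕ) (hd : 3 ≤ d) (b : ℝ)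
    (E : Fin (d ^ 2) → Matrix (Fin d) (Fin d) ℂ) (hE : IsSemiSIC d b E)
    (aM : ℝ)
    (haM : aM = (1 - Real.sqrt (1 - 4 * b * ((d : ℝ) ^ 2 - 1))) / 2)
    (k : ℕ)
    (hk : k = (Finset.univ.filter fun x => (E x).trace = (aM : ℂ)).card) :
    2 * k ≠ d ^ 2 ∧
    b = ((k : ℝ) - (d : ℝ)) * ((k : ℝ) + (d : ℝ) - (d : ℝ) ^ 2) /
        (((d : ℝ) ^ 2 - 1) * ((d : ℝ) ^ 2 - 2 * (k : ℝ)) ^ 2) := by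
  classical
  obtain ⟨hpsd, hrank, hsum, -, hb⟩ := hE
  set t : Fin (d ^ 2) → ℝ := fun x => (E x).trace.re
  have htr : ∀ x, ((t x : ℝ) : ℂ) = (E x).trace := fun x => (hpsd x).isHermitian.ofReal_re_trace
  have hquad : ∀ x, t x ^ 2 - t x + b * ((d : ℝ) ^ 2 - 1) = 0 := fun x => by
    have h := trace_add_eq_trace_mul_self_add_card_mul hsum hb x
    rw [trace_mul_self_of_rank_le_one (hrank x).le, ← htr, Fintype.card_fin] at h
    have h' : t x + b = t x ^ 2 + (d : ℝ) ^ 2 * b := by exact_mod_cast h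
    linear_combination -h'
  have hdisc : 0 ≤ 1 - 4 * b * ((d : ℝ) ^ 2 - 1) := by
    have x₀ : Fin (d ^ 2) := ⟨0, by positivity⟩
    nlinarith [hquad x₀, sq_nonneg (2 * t x₀ - 1)]
  have hvals : ∀ x, t x = aM ∨ t x = (1 + √(1 - 4 * b * ((d : ℝ) ^ 2 - 1))) / 2 := fun x => by
    have h := eq_or_eq_of_sq_sub_self_add_eq_zero (hquad x)
    rwa [← mul_assoc, ← haM] at h
  have hk_t : k = #{x | t x = aM} := by
    rw [hk]
    congr 1
    ext x
    simp only [mem_filter, ← htr, Complex.ofReal_inj]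
  have htrace_sum : ∑ x, t x = d := by
    have h : ∑ x, ((t x : ℝ) : ℂ) = d := by
      simp only [htr, ← trace_sum, hsum, trace_one, Fintype.card_fin]
    exact_mod_cast h
  have hcount := Fintype.sum_eq_card_mul_add_card_filter_mul_sub hvals
  rw [htrace_sum, Fintype.card_fin, Nat.cast_pow, ← hk_t, haM] at hcount
  have hd' : (3 : ℝ) ≤ d := by exact_mod_cast hd
  obtain ⟨hk_ne, hformula⟩ := semiSIC_parameter_eq_of_sq_eq_of_mul_eq (k := (k : ℝ)) (ne_of_gt (by nlinarith))
    (ne_of_gt (by nlinarith)) (Real.sq_sqrt hdisc) (by linear_combination -2 * hcount)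
  exact ⟨fun h => hk_ne (by rw [sub_eq_zero]; exact_mod_cast h.symm), hformula⟩

theorem b_formula_of_isSemiSIC (d : ℕ) (hd : 3 ≤ d) (b : ℝ)
    (E : Fin (d ^ 2) → Matrix (Fin d) (Fin d) ℂ) (hE : IsSemiSIC d b E)
    (aM : ℝ)
    (haM : aM = (1 - Real.sqrt (1 - 4 * b * ((d : ℝ) ^ 2 - 1))) / 2)
    (k : ℕ)
    (hk : k = (Finset.univ.filter fun x => (E x).trace = (aM : ℂ)).card)
    (hne : aM ≠ (1 + Real.sqrt (1 - 4 * b * ((d : ℝ) ^ 2 - 1))) / 2) :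
    2 * k ≠ d ^ 2 ∧
    b = ((k : ℝ) - (d : ℝ)) * ((k : ℝ) + (d : ℝ) - (d : ℝ) ^ 2) /
        (((d : ℝ) ^ 2 - 1) * ((d : ℝ) ^ 2 - 2 * (k : ℝ)) ^ 2) :=
  b_formula_of_isSemiSIC_general d hd b E hE aM haM k hk
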